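/- Let A be a Banach space over ℂ, let (S_n)_{n ∈ ℕ} be a sequence of linear subspaces of A, and let f : ℕ → ℝ with f(n) > 0 for all n. For a ∈ A define N(a) = ‖a‖ + sup_n f(n)⁻¹ · infDist(a, S_n), with values in [0, ∞], and let A^f = { a ∈ A : N(a) < ∞ }. Then A^f, equipped with the norm N, is complete: every sequence (a_k) in A^f that is Cauchy with respect to N converges with respect to N to some a ∈ A^f. -/

import Mathlib

/-
Since `‖a‖ ≤ N(a)`, an `N`-Cauchy sequence is Cauchy in `A` and has a limit `x` there. Each
summand `a ↦ f(n)⁻¹ · infDist(a, S_n)` is continuous, so `N` is lower semicontinuous and its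
sublevel sets are closed: the bound `N(a_k - a_l) ≤ ε` for large `l` passes to the limit
`N(a_k - x) ≤ ε`. Finiteness of `N(x)` then follows from the triangle inequality for `N`, which
comes from the quotient norm `infDist(a, S_n) = ‖a mod S_n‖`.
-/

open scoped ENNReal

open Filter Metric Topology

/-- The quasi-locality norm `‖a‖_f = ‖a‖ + sup_n f(n)⁻¹ · infDist(a, S_n)`, with values in
`[0,∞]`, associated with a decay function `f` and a filtration of local subspaces `S n`. -/
noncomputable def quasiLocalNorm {A : Type*} [NormedAddCommGroup A] [NormedSpace ℂ A]
    (S : ℕ → Submodule ℂ A) (f : ℕ → ℝ) (a : A) : ℝ≥0∞ :=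
  (‖a‖₊ : ℝ≥0∞) + ⨆ n, ENNReal.ofReal ((f n)⁻¹ * Metric.infDist a (S n : Set A))

lemma AddSubgroup.infDist_sub_le {E : Type*} [SeminormedAddCommGroup E] (S : AddSubgroup E)
    (u v : E) : infDist (u - v) S ≤ infDist u S + infDist v S := by
  simpa only [← QuotientAddGroup.mk_sub, QuotientAddGroup.norm_mk] using
    norm_sub_le (u : E ⧸ S) (v : E ⧸ S)

lemma AddSubgroup.ofReal_mul_infDist_sub_le {E : Type*} [SeminormedAddCommGroup E]
    (S : AddSubgroup E) (c : ℝ) (u v : E) :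
    ENNReal.ofReal (c * infDist (u - v) S)
      ≤ ENNReal.ofReal (c * infDist u S) + ENNReal.ofReal (c * infDist v S) := by
  simp only [ENNReal.ofReal_mul' infDist_nonneg, ← mul_add]
  gcongr
  exact (ENNReal.ofReal_le_ofReal (S.infDist_sub_le u v)).trans ENNReal.ofReal_add_le

section QuasiLocalNorm

variable {A : Type*} [NormedAddCommGroup A] [NormedSpace ℂ A] (S : ℕ → Submodule ℂ A) (f : ℕ → ℝ)

lemma enorm_le_quasiLocalNorm (a : A) : ‖a‖ₑ ≤ quasiLocalNorm S f a :=
  le_self_add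

lemma quasiLocalNorm_sub_le (u v : A) :
    quasiLocalNorm S f (u - v) ≤ quasiLocalNorm S f u + quasiLocalNorm S f v := by
  simp only [quasiLocalNorm, ← enorm_eq_nnnorm]
  rw [add_add_add_comm]
  refine add_le_add enorm_sub_le (iSup_le fun n ↦ ?_)
  exact ((S n).toAddSubgroup.ofReal_mul_infDist_sub_le _ u v).trans
    (add_le_add (le_iSup_of_le n le_rfl) (le_iSup_of_le n le_rfl))

lemma lowerSemicontinuous_quasiLocalNorm : LowerSemicontinuous (quasiLocalNorm S f) :=
  continuous_enorm.lowerSemicontinuous.add <| lowerSemicontinuous_iSup fun _ ↦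
    (ENNReal.continuous_ofReal.comp
      (continuous_const.mul (continuous_infDist_pt _))).lowerSemicontinuous

lemma quasiLocalNorm_le_of_tendsto {b : ℕ → A} {y : A} (hb : Tendsto b atTop (𝓝 y)) {r : ℝ≥0∞}
    (hr : ∀ᶠ l in atTop, quasiLocalNorm S f (b l) ≤ r) : quasiLocalNorm S f y ≤ r :=
  ((lowerSemicontinuous_quasiLocalNorm S f).isClosed_preimage r).mem_of_tendsto hb hr

lemma cauchySeq_of_quasiLocalNorm {a : ℕ → A}
    (hcauchy : ∀ ε : ℝ≥0∞, 0 < ε → ∃ K : ℕ, ∀ k ≥ K, ∀ l ≥ K,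
      quasiLocalNorm S f (a k - a l) < ε) :
    CauchySeq a := by
  refine EMetric.cauchySeq_iff.2 fun ε hε ↦ ?_
  obtain ⟨K, hK⟩ := hcauchy ε hε
  exact ⟨K, fun k hk l hl ↦ edist_eq_enorm_sub (a k) (a l) ▸
    (enorm_le_quasiLocalNorm S f _).trans_lt (hK k hk l hl)⟩

end QuasiLocalNorm

theorem stmt10_general {A : Type*} [NormedAddCommGroup A] [NormedSpace ℂ A] [CompleteSpace A]
    (S : ℕ → Submodule ℂ A) (f : ℕ → ℝ)
    (a : ℕ → A) (hfin : ∀ k, quasiLocalNorm S f (a k) < ⊤)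
    (hcauchy : ∀ ε : ℝ≥0∞, 0 < ε → ∃ K : ℕ, ∀ k ≥ K, ∀ l ≥ K,
      quasiLocalNorm S f (a k - a l) < ε) :
    ∃ x : A, quasiLocalNorm S f x < ⊤ ∧
      ∀ ε : ℝ≥0∞, 0 < ε → ∃ K : ℕ, ∀ k ≥ K, quasiLocalNorm S f (a k - x) < ε := by
  obtain ⟨x, hx⟩ := cauchySeq_tendsto_of_complete (cauchySeq_of_quasiLocalNorm S f hcauchy)
  have hlimit : ∀ ε, ∀ K, (∀ k ≥ K, ∀ l ≥ K, quasiLocalNorm S f (a k - a l) < ε) →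
      ∀ k ≥ K, quasiLocalNorm S f (a k - x) ≤ ε := fun ε K hK k hk ↦
    quasiLocalNorm_le_of_tendsto S f (hx.const_sub (a k))
      ((eventually_ge_atTop K).mono fun l hl ↦ (hK k hk l hl).le)
  refine ⟨x, ?_, fun ε hε ↦ ?_⟩
  · obtain ⟨K, hK⟩ := hcauchy 1 one_pos
    calc quasiLocalNorm S f x = quasiLocalNorm S f (a K - (a K - x)) := by rw [sub_sub_cancel]
      _ ≤ quasiLocalNorm S f (a K) + quasiLocalNorm S f (a K - x) := quasiLocalNorm_sub_le S f _ _
      _ ≤ quasiLocalNorm S f (a K) + 1 := by gcongr; exact hlimit 1 K hK K le_rfl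
      _ < ⊤ := ENNReal.add_lt_top.2 ⟨hfin K, ENNReal.one_lt_top⟩
  · obtain ⟨δ, hδ, hδε⟩ := exists_between hε
    obtain ⟨K, hK⟩ := hcauchy δ hδ
    exact ⟨K, fun k hk ↦ (hlimit δ K hK k hk).trans_lt hδε⟩

/-- The space `A^f = {a : N(a) < ∞}` is complete for the quasi-locality
norm `N`: every `N`-Cauchy sequence in `A^f` converges in `N` to an element of `A^f`. -/
theorem stmt10 {A : Type*} [NormedAddCommGroup A] [NormedSpace ℂ A] [CompleteSpace A]
    (S : ℕ → Submodule ℂ A) (f : ℕ → ℝ) (hf : ∀ n, 0 < f n)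
    (a : ℕ → A) (hfin : ∀ k, quasiLocalNorm S f (a k) < ⊤)
    (hcauchy : ∀ ε : ℝ≥0∞, 0 < ε → ∃ K : ℕ, ∀ k ≥ K, ∀ l ≥ K,
      quasiLocalNorm S f (a k - a l) < ε) :
    ∃ x : A, quasiLocalNorm S f x < ⊤ ∧
      ∀ ε : ℝ≥0∞, 0 < ε → ∃ K : ℕ, ∀ k ≥ K, quasiLocalNorm S f (a k - x) < ε :=
  stmt10_general S f a hfin hcauchy
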